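/- arXiv:1712.05674 — 2 statements merged into one kernel-verified Lean document; each statement's English description precedes it below -/
import Mathlib

section
/- Let N, L, K be positive integers, T = {f_1,...,f_K} ⊂ [0,1) distinct, c_k > 0, φ_k ∈ ℂ^{1×L} with ‖φ_k‖₂ = 1 for k = 1,...,K, and Ω ⊆ {1,...,N}. Set Y^o = Σ_{k=1}^K c_k a(f_k) φ_k. Suppose that the vectors {a_Ω(f_k)}_{k=1}^K are linearly independent and that there exists a matrix V ∈ ℂ^{N×L} such that the vector-valued polynomial Q(f) = a(f)ᴴ V satisfies: (i) Q(f_k) = φ_k for every f_k ∈ T; (ii) ‖Q(f)‖₂ < 1 for every f ∈ [0,1) \ T; and (iii) the j-th row of V is zero for every j ∉ Ω. Then Y^o is the unique solution of min_{Y ∈ ℂ^{N×L}} ‖Y‖_A subject to Y_Ω = Y^o_Ω, and Y^o = Σ_{k=1}^K c_k a(f_k) φ_k is the unique atomic decomposition achieving the atomic norm, with ‖Y^o‖_A = Σ_{k=1}^K c_k. -/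
open MeasureTheory ProbabilityTheory Finset

noncomputable section

/-- Euclidean norm of a finite complex vector. -/
def vnorm {ι : Type*} [Fintype ι] (x : ι → ℂ) : ℝ :=
  Real.sqrt (∑ i, Complex.normSq (x i))

/-- The atom `a(f) = (1, e^{2πif}, …, e^{2πi(N-1)f})`. -/
def atom (N : ℕ) (f : ℝ) : Fin N → ℂ :=
  fun j => Complex.exp (2 * Real.pi * Complex.I * f * (j : ℕ))

/-- Wrap-around distance on the unit circle `[0,1)`. -/
def wrapDist (x y : ℝ) : ℝ := min |x - y| (1 - |x - y|)

/-- Coefficients of the squared Fejér kernel. -/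
def gcoef (n : ℕ) (j : ℤ) : ℝ :=
  (1 / ((n : ℝ) + 1)) *
    ∑ k ∈ Finset.Icc (max (j - (n : ℤ) - 1) (-(n : ℤ) - 1)) (min (j + (n : ℤ) + 1) ((n : ℤ) + 1)),
      (1 - |(k : ℝ)| / ((n : ℝ) + 1)) * (1 - |((j - k : ℤ) : ℝ)| / ((n : ℝ) + 1))

/-- The partially observed squared Fejér kernel, with selection `sel`. -/
def fejerSel (n : ℕ) (sel : ℤ → Bool) (f : ℝ) : ℂ :=
  ∑ j ∈ Finset.Icc (-(2 * (n : ℤ))) (2 * (n : ℤ)),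
    (if sel j then (1 : ℂ) else 0) * (gcoef n j : ℂ) *
      Complex.exp (-(2 * Real.pi * Complex.I) * (j : ℤ) * f)

/-- The squared Fejér kernel (as a trigonometric polynomial). -/
def fejer (n : ℕ) : ℝ → ℂ := fejerSel n fun _ => true

/-- `l`-th derivative of the squared Fejér kernel. -/
def fejerD (n : ℕ) (l : ℕ) (f : ℝ) : ℂ := iteratedDeriv l (fejer n) f

/-- `l`-th derivative of the partially observed squared Fejér kernel. -/
def fejerSelD (n : ℕ) (sel : ℤ → Bool) (l : ℕ) (f : ℝ) : ℂ :=
  iteratedDeriv l (fejerSel n sel) f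

/-- The constant `c₀ = √(4π²n(n+2)/3) = √|K''(0)|`. -/
def c0 (n : ℕ) : ℝ := Real.sqrt (4 * Real.pi ^ 2 * n * (n + 2) / 3)

/-- The `2K × 2K` matrix built from a kernel-derivative function `κ l f`. -/
def Dgen {K : ℕ} (freq : Fin K → ℝ) (n : ℕ) (κ : ℕ → ℝ → ℂ) :
    Matrix (Fin K ⊕ Fin K) (Fin K ⊕ Fin K) ℂ :=
  fun r s =>
    match r, s with
    | .inl j, .inl k => κ 0 (freq j - freq k)
    | .inl j, .inr k => ((c0 n : ℝ) : ℂ)⁻¹ * κ 1 (freq j - freq k)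
    | .inr j, .inl k => -((c0 n : ℝ) : ℂ)⁻¹ * κ 1 (freq j - freq k)
    | .inr j, .inr k => -(((c0 n : ℝ) : ℂ)⁻¹) ^ 2 * κ 2 (freq j - freq k)

/-- The deterministic matrix `D`. -/
def Dmat {K : ℕ} (n : ℕ) (freq : Fin K → ℝ) : Matrix (Fin K ⊕ Fin K) (Fin K ⊕ Fin K) ℂ :=
  Dgen freq n (fejerD n)

/-- The random (partially observed) matrix `D̄`. -/
def DmatBar {K : ℕ} (n : ℕ) (freq : Fin K → ℝ) (sel : ℤ → Bool) :
    Matrix (Fin K ⊕ Fin K) (Fin K ⊕ Fin K) ℂ :=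
  Dgen freq n (fejerSelD n sel)

/-- Spectral norm (ℓ² operator norm) of a square complex matrix. -/
def specNorm {m : Type*} [Fintype m] [DecidableEq m] (A : Matrix m m ℂ) : ℝ :=
  ‖Matrix.toEuclideanCLM (𝕜 := ℂ) A‖

/-- First `K` columns of `D⁻¹`. -/
def Lcols {K : ℕ} (D : Matrix (Fin K ⊕ Fin K) (Fin K ⊕ Fin K) ℂ) :
    Matrix (Fin K ⊕ Fin K) (Fin K) ℂ :=
  fun i k => D⁻¹ i (Sum.inl k)

/-- The vector `v_l(f)` built from a kernel-derivative function `κ`. -/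
def vgen {K : ℕ} (freq : Fin K → ℝ) (n : ℕ) (κ : ℕ → ℝ → ℂ) (l : ℕ) (f : ℝ) :
    Fin K ⊕ Fin K → ℂ :=
  Sum.elim (fun k => ((((c0 n) ^ l)⁻¹ : ℝ) : ℂ) * (starRingEnd ℂ) (κ l (f - freq k)))
    (fun k => ((((c0 n) ^ (l + 1))⁻¹ : ℝ) : ℂ) * (starRingEnd ℂ) (κ (l + 1) (f - freq k)))

/-- The deterministic vector `v_l(f)`. -/
def vvec {K : ℕ} (n : ℕ) (freq : Fin K → ℝ) (l : ℕ) (f : ℝ) : Fin K ⊕ Fin K → ℂ :=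
  vgen freq n (fejerD n) l f

/-- The random vector `v̄_l(f)`. -/
def vvecBar {K : ℕ} (n : ℕ) (freq : Fin K → ℝ) (sel : ℤ → Bool) (l : ℕ) (f : ℝ) :
    Fin K ⊕ Fin K → ℂ :=
  vgen freq n (fejerSelD n sel) l f

/-- `Lᴴ x` for a `2K × K` matrix `L` and a `2K`-vector `x`. -/
def applyH {K : ℕ} (L : Matrix (Fin K ⊕ Fin K) (Fin K) ℂ) (x : Fin K ⊕ Fin K → ℂ) :
    Fin K → ℂ :=
  fun k => ∑ i, (starRingEnd ℂ) (L i k) * x i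

/-- The row vector `xᴴ L Φ ∈ ℂ^{1×L}`. -/
def quadForm {K L : ℕ} (x : Fin K ⊕ Fin K → ℂ) (Lm : Matrix (Fin K ⊕ Fin K) (Fin K) ℂ)
    (Φ : Fin K → Fin L → ℂ) : Fin L → ℂ :=
  fun a => ∑ k, (∑ i, (starRingEnd ℂ) (x i) * Lm i k) * Φ k a

/-- A probability measure on `ℂ^L` is the uniform distribution on the unit sphere iff it is
supported on the unit sphere and invariant under every unitary transformation. -/
def IsUniformOnSphere (L : ℕ) (ν : Measure (Fin L → ℂ)) : Prop :=
  IsProbabilityMeasure ν ∧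
  ν {x : Fin L → ℂ | ∑ i, Complex.normSq (x i) = 1}ᶜ = 0 ∧
  ∀ U : Matrix (Fin L) (Fin L) ℂ, U ∈ Matrix.unitaryGroup (Fin L) ℂ →
    ν.map (fun x i => ∑ j, U i j * x j) = ν

end
noncomputable section

/-- `(c, fr, φ)` is an atomic decomposition of `Y`. -/
def IsAtomicDecomp (N L : ℕ) (Y : Matrix (Fin N) (Fin L) ℂ) {m : ℕ}
    (c : Fin m → ℝ) (fr : Fin m → ℝ) (φ : Fin m → Fin L → ℂ) : Prop :=
  (∀ k, 0 < c k) ∧ (∀ k, fr k ∈ Set.Ico (0 : ℝ) 1) ∧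
  (∀ k, ∑ l, Complex.normSq (φ k l) = 1) ∧
  (∀ j l, Y j l = ∑ k, (c k : ℂ) * atom N (fr k) j * φ k l)

/-- The atomic norm of `Y ∈ ℂ^{N×L}`. -/
def atomicNorm (N L : ℕ) (Y : Matrix (Fin N) (Fin L) ℂ) : ℝ :=
  sInf {t : ℝ | ∃ (m : ℕ) (c fr : Fin m → ℝ) (φ : Fin m → Fin L → ℂ),
    IsAtomicDecomp N L Y c fr φ ∧ t = ∑ k, c k}

/-- Exact recovery: `Yo` is the unique solution of the atomic norm minimization problem with
observations on the rows indexed by `Ω`, its atomic norm equals `∑ c k`, and its atomic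
decomposition achieving the atomic norm is unique. -/
def ExactRecovery (N L K : ℕ) (f c : Fin K → ℝ) (φ : Fin K → Fin L → ℂ)
    (Ω : Finset (Fin N)) (Yo : Matrix (Fin N) (Fin L) ℂ) : Prop :=
  (∀ Y : Matrix (Fin N) (Fin L) ℂ, (∀ j ∈ Ω, ∀ l, Y j l = Yo j l) → Y ≠ Yo →
      atomicNorm N L Yo < atomicNorm N L Y) ∧
  atomicNorm N L Yo = ∑ k, c k ∧
  (∀ (m : ℕ) (c' fr' : Fin m → ℝ) (φ' : Fin m → Fin L → ℂ),
    IsAtomicDecomp N L Yo c' fr' φ' → Function.Injective fr' →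
    (∑ k, c' k) = ∑ k, c k →
    ∃ e : Fin m ≃ Fin K, ∀ k, fr' k = f (e k) ∧ c' k = c (e k) ∧ φ' k = φ (e k))

end

/-!
For any decomposition `Y = ∑ c'ₖ a(gₖ) φ'ₖ` of a matrix agreeing with `Y^o` on `Ω`, the certificate
gives `Re⟨V, Y⟩ = Re⟨V, Y^o⟩ = ∑ c_k` (since `V` vanishes off `Ω`) and
`Re⟨V, a(g) φ'⟩ ≤ ‖Q(g)‖ ≤ 1`, hence `∑ c_k + ∑ c'ₖ (1 - ‖Q(gₖ)‖) ≤ ∑ c'ₖ`. So `‖Y‖_A ≥ ∑ c_k`,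
with equality for `Y^o`.

A decomposition of `Y` with small excess cost therefore carries little mass on atoms far from
`T`, where `1 - ‖Q‖` is bounded below; snapping every atom to a nearest `a(f_p)` moves `Y` little.
The snapped matrix minus `Y^o` lies columnwise in the span of the `a(f_p)`, where linear
independence of the `a_Ω(f_p)` bounds it by its rows in `Ω`, on which `Y` and `Y^o` agree. So
`Y = Y^o` whenever `‖Y‖_A = ∑ c_k`.

In an optimal decomposition of `Y^o` every atom satisfies `Re⟨Q(g), φ'⟩ = 1`, forcing `g ∈ T` and
`φ' = φ_p`; linear independence then matches the coefficients.
-/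

open scoped ComplexConjugate

section Vnorm

variable {ι : Type*} [Fintype ι]

theorem vnorm_eq_norm_toLp (x : ι → ℂ) : vnorm x = ‖(WithLp.toLp 2 x : EuclideanSpace ℂ ι)‖ := by
  simp [vnorm, EuclideanSpace.norm_eq, Complex.sq_norm]

theorem vnorm_sq (x : ι → ℂ) : vnorm x ^ 2 = ∑ i, Complex.normSq (x i) :=
  Real.sq_sqrt (Finset.sum_nonneg fun i _ => Complex.normSq_nonneg (x i))

theorem vnorm_of_sum_normSq_eq_one {x : ι → ℂ} (h : ∑ i, Complex.normSq (x i) = 1) :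
    vnorm x = 1 := by
  rw [vnorm, h, Real.sqrt_one]

theorem norm_apply_le_vnorm (x : ι → ℂ) (i : ι) : ‖x i‖ ≤ vnorm x := by
  rw [vnorm_eq_norm_toLp]
  exact PiLp.norm_apply_le (WithLp.toLp 2 x : EuclideanSpace ℂ ι) i

theorem vnorm_pos {x : ι → ℂ} (hx : x ≠ 0) : 0 < vnorm x := by
  rw [vnorm_eq_norm_toLp, norm_pos_iff]
  exact fun h => hx (WithLp.toLp_injective 2 (h.trans (WithLp.toLp_zero 2).symm))

theorem continuous_vnorm : Continuous (vnorm : (ι → ℂ) → ℝ) := by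
  simp_rw [funext vnorm_eq_norm_toLp]
  exact continuous_norm.comp (PiLp.continuous_toLp 2 _)

theorem inner_toLp (x y : ι → ℂ) :
    inner ℂ (WithLp.toLp 2 x : EuclideanSpace ℂ ι) (WithLp.toLp 2 y) = ∑ i, conj (x i) * y i := by
  simp [PiLp.inner_apply, mul_comm]

theorem re_sum_conj_mul_le (x y : ι → ℂ) : (∑ i, conj (x i) * y i).re ≤ vnorm x * vnorm y := by
  rw [← inner_toLp, vnorm_eq_norm_toLp, vnorm_eq_norm_toLp]
  exact re_inner_le_norm (𝕜 := ℂ) _ _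

theorem eq_of_re_sum_conj_mul_eq_one {x y : ι → ℂ} (hx : vnorm x = 1) (hy : vnorm y = 1)
    (hxy : (∑ i, conj (x i) * y i).re = 1) : x = y := by
  rw [vnorm_eq_norm_toLp] at hx hy
  rw [← inner_toLp] at hxy
  have h : ‖(WithLp.toLp 2 x : EuclideanSpace ℂ ι) - WithLp.toLp 2 y‖ ^ 2 = 0 := by
    rw [norm_sub_sq (𝕜 := ℂ), hx, hy, RCLike.re_to_complex, hxy]
    norm_num
  exact WithLp.toLp_injective 2
    (sub_eq_zero.1 (norm_eq_zero.1 ((pow_eq_zero_iff two_ne_zero).1 h)))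

end Vnorm

theorem IsCompact.exists_le_add_mul {X : Type*} [TopologicalSpace X] {s : Set X}
    (hs : IsCompact s) {d h : X → ℝ} (hd : Continuous d) (hh : Continuous h)
    (hh₀ : ∀ x ∈ s, 0 ≤ h x) (hdh : ∀ x ∈ s, h x = 0 → d x ≤ 0) {δ : ℝ} (hδ : 0 < δ) :
    ∃ M ≥ 0, ∀ x ∈ s, d x ≤ δ + M * h x := by
  set s' := s ∩ d ⁻¹' Set.Ici δ
  rcases s'.eq_empty_or_nonempty with hempty | hne
  · refine ⟨0, le_rfl, fun x hx => ?_⟩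
    have : x ∉ s' := hempty ▸ Set.notMem_empty x
    simp only [s', Set.mem_inter_iff, Set.mem_preimage, Set.mem_Ici, not_and, not_le] at this
    linarith [this hx]
  have hs' : IsCompact s' := hs.inter_right (isClosed_Ici.preimage hd)
  obtain ⟨x₀, ⟨hx₀s, hx₀δ : δ ≤ d x₀⟩, hmin⟩ := hs'.exists_isMinOn hne hh.continuousOn
  obtain ⟨B, hB⟩ := hs.bddAbove_image hd.continuousOn
  have hη : 0 < h x₀ := (hh₀ x₀ hx₀s).lt_of_ne fun h0 => by
    linarith [hdh x₀ hx₀s h0.symm]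
  have hB₀ : δ ≤ B := le_trans hx₀δ (hB ⟨x₀, hx₀s, rfl⟩)
  refine ⟨B / h x₀, div_nonneg (hδ.le.trans hB₀) hη.le, fun x hx => ?_⟩
  by_cases hxδ : δ ≤ d x
  · have hhx : h x₀ ≤ h x := hmin ⟨hx, hxδ⟩
    have : B ≤ B / h x₀ * h x := by
      rw [div_mul_eq_mul_div, le_div_iff₀ hη]
      exact mul_le_mul_of_nonneg_left hhx (hδ.le.trans hB₀)
    linarith [hB ⟨x, hx, rfl⟩, hh₀ x hx]
  · have := mul_nonneg (div_nonneg (hδ.le.trans hB₀) hη.le) (hh₀ x hx)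
    linarith

theorem exists_norm_le_mul_norm_restrict {ι κ : Type*} [Fintype ι] [Fintype κ]
    {u : ι → κ → ℂ} {s : Finset κ} (hu : LinearIndependent ℂ fun i (j : s) => u i j) :
    ∃ C ≥ 0, ∀ z ∈ Submodule.span ℂ (Set.range u), ‖z‖ ≤ C * ‖fun j : s => z j‖ := by
  set P := Submodule.span ℂ (Set.range u)
  set R : P →ₗ[ℂ] (s → ℂ) := (LinearMap.funLeft ℂ ℂ (Subtype.val : s → κ)).comp P.subtype
  have hR : LinearMap.ker R = ⊥ := by
    refine LinearMap.ker_eq_bot'.2 fun ⟨z, hz⟩ hRz => ?_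
    obtain ⟨ρ, rfl⟩ := (Submodule.mem_span_range_iff_exists_fun ℂ).1 hz
    have hρ := Fintype.linearIndependent_iff.1 hu ρ (by
      ext j
      simpa [R, LinearMap.funLeft] using congrFun hRz j)
    simp [hρ]
  obtain ⟨C, -, hC⟩ := R.exists_antilipschitzWith hR
  exact ⟨C, C.2, fun z hz => hC.le_mul_norm (map_zero R) ⟨z, hz⟩⟩

theorem LinearIndependent.vecMulVec {ι κ μ : Type*} [Fintype ι] {u : ι → κ → ℂ}
    (hu : LinearIndependent ℂ u) {w : ι → μ → ℂ} (hw : ∀ i, w i ≠ 0) :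
    LinearIndependent ℂ fun i => Matrix.vecMulVec (u i) (w i) := by
  refine Fintype.linearIndependent_iff.2 fun ρ hρ i => ?_
  obtain ⟨l, hl⟩ := Function.ne_iff.1 (hw i)
  have hcol := Fintype.linearIndependent_iff.1 hu (fun i => ρ i * w i l) (by
    ext j
    have := congrFun (congrFun hρ j) l
    simp only [Matrix.sum_apply, Matrix.smul_apply, Matrix.vecMulVec_apply, smul_eq_mul] at this
    simpa [mul_comm, mul_left_comm] using this)
  exact (mul_eq_zero.1 (hcol i)).resolve_right hl

theorem LinearIndependent.bijective_of_sum_comp_eq {ι κ M : Type*} [Fintype ι] [Fintype κ]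
    [AddCommGroup M] [Module ℂ M] {v : ι → M} (hv : LinearIndependent ℂ v) {p : κ → ι}
    (hp : Function.Injective p) {a : κ → ℂ} {b : ι → ℂ} (hb : ∀ i, b i ≠ 0)
    (h : ∑ k, a k • v (p k) = ∑ i, b i • v i) :
    Function.Bijective p ∧ ∀ k, a k = b (p k) := by
  classical
  set d : ι → ℂ := fun i => ∑ k, if p k = i then a k else 0
  have hd : d = b := by
    refine funext (Fintype.linearIndependent_iffₛ.1 hv d b (h ▸ ?_))
    simp only [d, Finset.sum_smul, ite_smul, zero_smul]
    rw [Finset.sum_comm]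
    simp
  refine ⟨⟨hp, fun i => ?_⟩, fun k => ?_⟩
  · by_contra! hi
    exact hb i (by simp [← hd, d, hi])
  · rw [← hd]
    simp [d, hp.eq_iff]

section Atom

theorem atom_one (N : ℕ) : atom N 1 = atom N 0 := by
  funext j
  rw [atom, atom, show 2 * Real.pi * Complex.I * ((1 : ℝ) : ℂ) * (j : ℕ) =
    ((j : ℕ) : ℤ) * (2 * Real.pi * Complex.I) by push_cast; ring, Complex.exp_int_mul_two_pi_mul_I]
  simp

theorem continuous_atom (N : ℕ) : Continuous (atom N) := by
  unfold atom
  fun_prop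

theorem atom_grid_eq_pow {N : ℕ} (q j : Fin N) :
    atom N ((q : ℕ) / N) j = (Complex.exp (2 * Real.pi * Complex.I / N) ^ (q : ℕ)) ^ (j : ℕ) := by
  rw [← pow_mul, ← Complex.exp_nat_mul, atom]
  push_cast
  ring_nf

end Atom

section Decomposition

variable {N L : ℕ}

noncomputable def atomSum (N : ℕ) {L m : ℕ} (c fr : Fin m → ℝ) (φ : Fin m → Fin L → ℂ) :
    Matrix (Fin N) (Fin L) ℂ :=
  fun j l => ∑ k, (c k : ℂ) * atom N (fr k) j * φ k l

theorem IsAtomicDecomp.eq_atomSum {Y : Matrix (Fin N) (Fin L) ℂ} {m : ℕ} {c fr : Fin m → ℝ}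
    {φ : Fin m → Fin L → ℂ} (h : IsAtomicDecomp N L Y c fr φ) : Y = atomSum N c fr φ :=
  funext fun j => funext fun l => h.2.2.2 j l

def HasAtomicDecomp (N L : ℕ) (Y : Matrix (Fin N) (Fin L) ℂ) : Prop :=
  ∃ (m : ℕ) (c fr : Fin m → ℝ) (φ : Fin m → Fin L → ℂ), IsAtomicDecomp N L Y c fr φ

theorem hasAtomicDecomp_zero : HasAtomicDecomp N L 0 :=
  ⟨0, Fin.elim0, Fin.elim0, Fin.elim0, fun k => k.elim0, fun k => k.elim0, fun k => k.elim0,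
    fun _ _ => by simp⟩

theorem IsAtomicDecomp.append {Y₁ Y₂ : Matrix (Fin N) (Fin L) ℂ} {m₁ m₂ : ℕ}
    {c₁ fr₁ : Fin m₁ → ℝ} {φ₁ : Fin m₁ → Fin L → ℂ} {c₂ fr₂ : Fin m₂ → ℝ}
    {φ₂ : Fin m₂ → Fin L → ℂ} (h₁ : IsAtomicDecomp N L Y₁ c₁ fr₁ φ₁)
    (h₂ : IsAtomicDecomp N L Y₂ c₂ fr₂ φ₂) :
    IsAtomicDecomp N L (Y₁ + Y₂) (Fin.append c₁ c₂) (Fin.append fr₁ fr₂) (Fin.append φ₁ φ₂) := by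
  refine ⟨fun k => ?_, fun k => ?_, fun k => ?_, fun j l => ?_⟩
  · refine Fin.addCases (fun i => ?_) (fun i => ?_) k
    · simpa using h₁.1 i
    · simpa using h₂.1 i
  · refine Fin.addCases (fun i => ?_) (fun i => ?_) k
    · simpa using h₁.2.1 i
    · simpa using h₂.2.1 i
  · refine Fin.addCases (fun i => ?_) (fun i => ?_) k
    · simpa using h₁.2.2.1 i
    · simpa using h₂.2.2.1 i
  · simp [Fin.sum_univ_add, h₁.2.2.2, h₂.2.2.2]

theorem HasAtomicDecomp.add {Y₁ Y₂ : Matrix (Fin N) (Fin L) ℂ} (h₁ : HasAtomicDecomp N L Y₁)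
    (h₂ : HasAtomicDecomp N L Y₂) : HasAtomicDecomp N L (Y₁ + Y₂) := by
  obtain ⟨m₁, c₁, fr₁, φ₁, h₁⟩ := h₁
  obtain ⟨m₂, c₂, fr₂, φ₂, h₂⟩ := h₂
  exact ⟨_, _, _, _, h₁.append h₂⟩

theorem hasAtomicDecomp_atom_mul {g : ℝ} (hg : g ∈ Set.Ico (0 : ℝ) 1) (ψ : Fin L → ℂ) :
    HasAtomicDecomp N L fun j l => atom N g j * ψ l := by
  by_cases hψ : ψ = 0
  · subst hψ
    simp only [Pi.zero_apply, mul_zero]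
    exact hasAtomicDecomp_zero
  have hpos := vnorm_pos hψ
  refine ⟨1, fun _ => vnorm ψ, fun _ => g, fun _ l => ψ l / vnorm ψ, fun _ => hpos, fun _ => hg,
    fun _ => ?_, fun j l => ?_⟩
  · simp_rw [Complex.normSq_div, Complex.normSq_ofReal, ← Finset.sum_div, ← vnorm_sq]
    field_simp
  · simp only [Finset.univ_unique, Finset.sum_singleton]
    field_simp [Complex.ofReal_ne_zero.2 hpos.ne']

/-- The Fourier grid `q / N` gives an invertible (Vandermonde) system of atoms. -/
theorem exists_eq_sum_atom_grid (Y : Matrix (Fin N) (Fin L) ℂ) :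
    ∃ ψ : Fin N → Fin L → ℂ, Y = ∑ q : Fin N, fun j l => atom N ((q : ℕ) / N) j * ψ q l := by
  rcases N.eq_zero_or_pos with rfl | hN
  · exact ⟨0, funext fun j => j.elim0⟩
  set ζ := Complex.exp (2 * Real.pi * Complex.I / N)
  set A : Matrix (Fin N) (Fin N) ℂ :=
    Matrix.transpose (Matrix.vandermonde fun q : Fin N => ζ ^ (q : ℕ))
  have hA : IsUnit A.det := by
    rw [Matrix.det_transpose, isUnit_iff_ne_zero, Matrix.det_vandermonde_ne_zero_iff]
    exact fun q q' h => Fin.ext <| (Complex.isPrimitiveRoot_exp N hN.ne').pow_inj q.2 q'.2 h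
  refine ⟨A⁻¹ * Y, ?_⟩
  ext j l
  conv_lhs => rw [← Matrix.one_mul Y, ← Matrix.mul_nonsing_inv A hA, Matrix.mul_assoc]
  simp [Matrix.mul_apply, A, atom_grid_eq_pow, ζ]

theorem hasAtomicDecomp (Y : Matrix (Fin N) (Fin L) ℂ) : HasAtomicDecomp N L Y := by
  obtain ⟨ψ, rfl⟩ := exists_eq_sum_atom_grid Y
  refine Finset.sum_induction _ _ (fun _ _ => HasAtomicDecomp.add) hasAtomicDecomp_zero
    fun q _ => hasAtomicDecomp_atom_mul ⟨by positivity, ?_⟩ (ψ q)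
  exact (div_lt_one (by exact_mod_cast q.pos)).2 (by exact_mod_cast q.2)

theorem atomicNorm_le {Y : Matrix (Fin N) (Fin L) ℂ} {m : ℕ} {c fr : Fin m → ℝ}
    {φ : Fin m → Fin L → ℂ} (h : IsAtomicDecomp N L Y c fr φ) : atomicNorm N L Y ≤ ∑ k, c k := by
  refine csInf_le ⟨0, ?_⟩ ⟨m, c, fr, φ, h, rfl⟩
  rintro t ⟨m, c, fr, φ, h, rfl⟩
  exact Finset.sum_nonneg fun k _ => (h.1 k).le

theorem le_atomicNorm {Y : Matrix (Fin N) (Fin L) ℂ} {a : ℝ}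
    (h : ∀ (m : ℕ) (c fr : Fin m → ℝ) (φ : Fin m → Fin L → ℂ),
      IsAtomicDecomp N L Y c fr φ → a ≤ ∑ k, c k) : a ≤ atomicNorm N L Y := by
  obtain ⟨m, c, fr, φ, hd⟩ := hasAtomicDecomp Y
  refine le_csInf ⟨_, m, c, fr, φ, hd, rfl⟩ ?_
  rintro t ⟨m, c, fr, φ, hd, rfl⟩
  exact h m c fr φ hd

theorem exists_isAtomicDecomp_lt {Y : Matrix (Fin N) (Fin L) ℂ} {b : ℝ}
    (h : atomicNorm N L Y < b) : ∃ (m : ℕ) (c fr : Fin m → ℝ) (φ : Fin m → Fin L → ℂ),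
      IsAtomicDecomp N L Y c fr φ ∧ ∑ k, c k < b := by
  by_contra! hge
  exact (le_atomicNorm hge).not_gt h

theorem norm_atomSum_sub_atomSum_le {m : ℕ} {c : Fin m → ℝ} (hc : ∀ k, 0 ≤ c k)
    (g g' : Fin m → ℝ) {φ : Fin m → Fin L → ℂ} (hφ : ∀ k l, ‖φ k l‖ ≤ 1) (i : Fin N)
    (l : Fin L) : ‖atomSum N c g φ i l - atomSum N c g' φ i l‖ ≤
      ∑ k, c k * ‖atom N (g k) - atom N (g' k)‖ := by
  rw [atomSum, atomSum, ← Finset.sum_sub_distrib]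
  refine (norm_sum_le _ _).trans (Finset.sum_le_sum fun k _ => ?_)
  rw [← sub_mul, ← mul_sub, norm_mul, norm_mul, Complex.norm_real, Real.norm_of_nonneg (hc k)]
  calc c k * ‖atom N (g k) i - atom N (g' k) i‖ * ‖φ k l‖
      ≤ c k * ‖atom N (g k) - atom N (g' k)‖ * 1 := by
        gcongr
        · exact mul_nonneg (hc k) (norm_nonneg _)
        · exact hc k
        · exact norm_le_pi_norm (atom N (g k) - atom N (g' k)) i
        · exact hφ k l
    _ = c k * ‖atom N (g k) - atom N (g' k)‖ := mul_one _

end Decomposition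

section Duality

variable {N L : ℕ}

/-- The dual polynomial `Q(g) = a(g)ᴴ V`. -/
noncomputable def dualPoly (V : Matrix (Fin N) (Fin L) ℂ) (g : ℝ) : Fin L → ℂ :=
  fun l => ∑ j, conj (atom N g j) * V j l

def frobInner (V Y : Matrix (Fin N) (Fin L) ℂ) : ℂ := ∑ j, ∑ l, conj (V j l) * Y j l

theorem dualPoly_congr (V : Matrix (Fin N) (Fin L) ℂ) {g g₀ : ℝ} (h : atom N g = atom N g₀) :
    dualPoly V g = dualPoly V g₀ := by
  unfold dualPoly
  rw [h]

theorem continuous_dualPoly (V : Matrix (Fin N) (Fin L) ℂ) : Continuous (dualPoly V) := by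
  have := continuous_atom N
  unfold dualPoly
  fun_prop

theorem frobInner_atomSum (V : Matrix (Fin N) (Fin L) ℂ) {m : ℕ} (c fr : Fin m → ℝ)
    (φ : Fin m → Fin L → ℂ) : frobInner V (atomSum N c fr φ) =
      ∑ k, (c k : ℂ) * ∑ l, conj (dualPoly V (fr k) l) * φ k l := by
  simp only [frobInner, atomSum, dualPoly, map_sum, map_mul, Complex.conj_conj, Finset.mul_sum,
    Finset.sum_mul]
  rw [Finset.sum_congr rfl fun j _ => Finset.sum_comm, Finset.sum_comm]
  refine Finset.sum_congr rfl fun k _ => ?_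
  rw [Finset.sum_comm]
  refine Finset.sum_congr rfl fun l _ => Finset.sum_congr rfl fun j _ => ?_
  ring

theorem IsAtomicDecomp.re_frobInner_add_le {Y : Matrix (Fin N) (Fin L) ℂ} {m : ℕ}
    {c fr : Fin m → ℝ} {φ : Fin m → Fin L → ℂ} (h : IsAtomicDecomp N L Y c fr φ)
    (V : Matrix (Fin N) (Fin L) ℂ) :
    (frobInner V Y).re + ∑ k, c k * (1 - vnorm (dualPoly V (fr k))) ≤ ∑ k, c k := by
  have hpair : ∀ k, (∑ l, conj (dualPoly V (fr k) l) * φ k l).re ≤ vnorm (dualPoly V (fr k)) :=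
    fun k => (re_sum_conj_mul_le _ _).trans_eq (by rw [vnorm_of_sum_normSq_eq_one (h.2.2.1 k),
      mul_one])
  rw [h.eq_atomSum, frobInner_atomSum, Complex.re_sum, ← Finset.sum_add_distrib]
  refine Finset.sum_le_sum fun k _ => ?_
  rw [Complex.re_ofReal_mul]
  nlinarith [h.1 k, hpair k]

theorem frobInner_eq_of_eqOn {Ω : Finset (Fin N)} {V : Matrix (Fin N) (Fin L) ℂ}
    (hV : ∀ j ∉ Ω, ∀ l, V j l = 0) {Y Y' : Matrix (Fin N) (Fin L) ℂ}
    (hY : ∀ j ∈ Ω, ∀ l, Y j l = Y' j l) : frobInner V Y = frobInner V Y' := by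
  refine Finset.sum_congr rfl fun j _ => Finset.sum_congr rfl fun l _ => ?_
  by_cases hj : j ∈ Ω
  · rw [hY j hj l]
  · simp [hV j hj l]

end Duality

section Certificate

variable {N L K : ℕ} {f c : Fin K → ℝ} {φ : Fin K → Fin L → ℂ} {Ω : Finset (Fin N)}
  {V : Matrix (Fin N) (Fin L) ℂ}

theorem vnorm_dualPoly_le_one (hφ : ∀ k, ∑ l, Complex.normSq (φ k l) = 1)
    (hQeq : ∀ k, dualPoly V (f k) = φ k)
    (hQlt : ∀ g ∈ Set.Ico (0 : ℝ) 1, g ∉ Set.range f → vnorm (dualPoly V g) < 1)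
    {g : ℝ} (hg : g ∈ Set.Ico (0 : ℝ) 1) : vnorm (dualPoly V g) ≤ 1 := by
  by_cases hgf : g ∈ Set.range f
  · obtain ⟨k, rfl⟩ := hgf
    rw [hQeq k, vnorm_of_sum_normSq_eq_one (hφ k)]
  · exact (hQlt g hg hgf).le

theorem frobInner_atomSum_eq_sum (hφ : ∀ k, ∑ l, Complex.normSq (φ k l) = 1)
    (hQeq : ∀ k, dualPoly V (f k) = φ k) :
    frobInner V (atomSum N c f φ) = ((∑ k, c k : ℝ) : ℂ) := by
  rw [frobInner_atomSum, Complex.ofReal_sum]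
  refine Finset.sum_congr rfl fun k _ => ?_
  simp_rw [hQeq k, mul_comm (conj _), Complex.mul_conj, ← Complex.ofReal_sum, hφ k]
  simp

theorem sum_add_sum_mul_one_sub_le (hφ : ∀ k, ∑ l, Complex.normSq (φ k l) = 1)
    (hQeq : ∀ k, dualPoly V (f k) = φ k) (hVz : ∀ j ∉ Ω, ∀ l, V j l = 0)
    {Y : Matrix (Fin N) (Fin L) ℂ} (hY : ∀ j ∈ Ω, ∀ l, Y j l = atomSum N c f φ j l) {m : ℕ}
    {c' g' : Fin m → ℝ} {φ' : Fin m → Fin L → ℂ} (h : IsAtomicDecomp N L Y c' g' φ') :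
    ∑ k, c k + ∑ k, c' k * (1 - vnorm (dualPoly V (g' k))) ≤ ∑ k, c' k := by
  have := h.re_frobInner_add_le V
  rwa [frobInner_eq_of_eqOn hVz hY, frobInner_atomSum_eq_sum hφ hQeq, Complex.ofReal_re] at this

theorem sum_le_atomicNorm (hφ : ∀ k, ∑ l, Complex.normSq (φ k l) = 1)
    (hQeq : ∀ k, dualPoly V (f k) = φ k)
    (hQlt : ∀ g ∈ Set.Ico (0 : ℝ) 1, g ∉ Set.range f → vnorm (dualPoly V g) < 1)
    (hVz : ∀ j ∉ Ω, ∀ l, V j l = 0) {Y : Matrix (Fin N) (Fin L) ℂ}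
    (hY : ∀ j ∈ Ω, ∀ l, Y j l = atomSum N c f φ j l) : ∑ k, c k ≤ atomicNorm N L Y := by
  refine le_atomicNorm fun m c' g' φ' h => ?_
  have hgap : 0 ≤ ∑ k, c' k * (1 - vnorm (dualPoly V (g' k))) :=
    Finset.sum_nonneg fun k _ => mul_nonneg (h.1 k).le
      (sub_nonneg.2 (vnorm_dualPoly_le_one hφ hQeq hQlt (h.2.1 k)))
  linarith [sum_add_sum_mul_one_sub_le hφ hQeq hVz hY h]

/-- By compactness of `[0, 1]` (and `a(1) = a(0)`), `‖Q‖` stays uniformly below `1` at atoms a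
fixed distance away from the certificate atoms. -/
theorem exists_norm_atom_sub_atom_le (hK : 0 < K) (hφ : ∀ k, ∑ l, Complex.normSq (φ k l) = 1)
    (hQeq : ∀ k, dualPoly V (f k) = φ k)
    (hQlt : ∀ g ∈ Set.Ico (0 : ℝ) 1, g ∉ Set.range f → vnorm (dualPoly V g) < 1)
    {δ : ℝ} (hδ : 0 < δ) : ∃ M ≥ 0, ∀ g ∈ Set.Ico (0 : ℝ) 1, ∃ p,
      ‖atom N g - atom N (f p)‖ ≤ δ + M * (1 - vnorm (dualPoly V g)) := by
  set T := Set.range fun p => atom N (f p)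
  have hwrap : ∀ g ∈ Set.Icc (0 : ℝ) 1, ∃ g₀ ∈ Set.Ico (0 : ℝ) 1, atom N g = atom N g₀ := by
    rintro g ⟨hg₀, hg₁⟩
    rcases hg₁.lt_or_eq with hlt | rfl
    · exact ⟨g, ⟨hg₀, hlt⟩, rfl⟩
    · exact ⟨0, ⟨le_rfl, one_pos⟩, atom_one N⟩
  have hh₀ : ∀ g ∈ Set.Icc (0 : ℝ) 1, 0 ≤ 1 - vnorm (dualPoly V g) := by
    intro g hg
    obtain ⟨g₀, hg₀, hg⟩ := hwrap g hg
    rw [dualPoly_congr V hg, sub_nonneg]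
    exact vnorm_dualPoly_le_one hφ hQeq hQlt hg₀
  have hdh : ∀ g ∈ Set.Icc (0 : ℝ) 1, 1 - vnorm (dualPoly V g) = 0 →
      Metric.infDist (atom N g) T ≤ 0 := by
    intro g hg hzero
    obtain ⟨g₀, hg₀, hg⟩ := hwrap g hg
    rw [dualPoly_congr V hg, sub_eq_zero] at hzero
    rw [hg]
    by_cases hg₀f : g₀ ∈ Set.range f
    · obtain ⟨p, rfl⟩ := hg₀f
      exact (Metric.infDist_zero_of_mem (Set.mem_range_self (f := fun p => atom N (f p)) p)).le
    · exact absurd hzero.symm (hQlt g₀ hg₀ hg₀f).ne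
  obtain ⟨M, hM, hle⟩ := isCompact_Icc.exists_le_add_mul
    ((Metric.continuous_infDist_pt T).comp (continuous_atom N))
    (continuous_const.sub (continuous_vnorm.comp (continuous_dualPoly V))) hh₀ hdh hδ
  have : Nonempty (Fin K) := ⟨⟨0, hK⟩⟩
  refine ⟨M, hM, fun g hg => ?_⟩
  obtain ⟨_, ⟨p, rfl⟩, hp⟩ := (Set.finite_range fun p => atom N (f p)).isCompact
    |>.exists_infDist_eq_dist (Set.range_nonempty _) (atom N g)
  exact ⟨p, by simpa [← dist_eq_norm, ← hp] using hle g (Set.Ico_subset_Icc_self hg)⟩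

theorem exists_norm_sub_atomSum_le
    (hLI : LinearIndependent ℂ fun k : Fin K => fun j : {j : Fin N // j ∈ Ω} =>
      atom N (f k) (j : Fin N)) :
    ∃ C > 0, ∀ Y : Matrix (Fin N) (Fin L) ℂ, (∀ j ∈ Ω, ∀ l, Y j l = atomSum N c f φ j l) →
      ∀ (m : ℕ) (c' g' : Fin m → ℝ) (φ' : Fin m → Fin L → ℂ), IsAtomicDecomp N L Y c' g' φ' →
      ∀ (p : Fin m → Fin K) i l, ‖Y i l - atomSum N c f φ i l‖ ≤
        C * ∑ k, c' k * ‖atom N (g' k) - atom N (f (p k))‖ := by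
  obtain ⟨C, hC, hCz⟩ := exists_norm_le_mul_norm_restrict hLI
  refine ⟨1 + C, by positivity, fun Y hY m c' g' φ' h p i l => ?_⟩
  set S := ∑ k, c' k * ‖atom N (g' k) - atom N (f (p k))‖
  have hS : 0 ≤ S := Finset.sum_nonneg fun k _ => mul_nonneg (h.1 k).le (norm_nonneg _)
  set Y' := atomSum N c' (fun k => f (p k)) φ'
  have hsnap : ∀ i l, ‖Y i l - Y' i l‖ ≤ S := fun i l => by
    rw [h.eq_atomSum]
    exact norm_atomSum_sub_atomSum_le (fun k => (h.1 k).le) _ _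
      (fun k l => (norm_apply_le_vnorm _ l).trans (vnorm_of_sum_normSq_eq_one (h.2.2.1 k)).le) i l
  set z : Fin N → ℂ := fun j => Y' j l - atomSum N c f φ j l
  have hz : z ∈ Submodule.span ℂ (Set.range fun q => atom N (f q)) := by
    have hz : z = ∑ k, (c' k * φ' k l : ℂ) • atom N (f (p k)) -
        ∑ q, (c q * φ q l : ℂ) • atom N (f q) := by
      ext j
      simp only [z, Y', atomSum, Pi.sub_apply, Finset.sum_apply, Pi.smul_apply, smul_eq_mul]
      congr 1 <;> exact Finset.sum_congr rfl fun _ _ => by ring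
    rw [hz]
    exact Submodule.sub_mem _
      (Submodule.sum_mem _ fun k _ => Submodule.smul_mem _ _ (Submodule.subset_span ⟨p k, rfl⟩))
      (Submodule.sum_mem _ fun q _ => Submodule.smul_mem _ _ (Submodule.subset_span ⟨q, rfl⟩))
  have hzΩ : ‖fun j : {j // j ∈ Ω} => z j‖ ≤ S := by
    refine (pi_norm_le_iff_of_nonneg hS).2 fun j => ?_
    rw [← norm_neg, neg_sub, ← hY j j.2 l]
    exact hsnap j l
  calc ‖Y i l - atomSum N c f φ i l‖ = ‖(Y i l - Y' i l) + z i‖ := by simp [z]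
    _ ≤ S + C * S := norm_add_le_of_le (hsnap i l)
        ((norm_le_pi_norm z i).trans ((hCz z hz).trans (mul_le_mul_of_nonneg_left hzΩ hC)))
    _ = (1 + C) * S := by ring

theorem exists_sum_mul_norm_atom_sub_le (hK : 0 < K)
    (hφ : ∀ k, ∑ l, Complex.normSq (φ k l) = 1) (hQeq : ∀ k, dualPoly V (f k) = φ k)
    (hQlt : ∀ g ∈ Set.Ico (0 : ℝ) 1, g ∉ Set.range f → vnorm (dualPoly V g) < 1)
    (hVz : ∀ j ∉ Ω, ∀ l, V j l = 0) {δ : ℝ} (hδ : 0 < δ) :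
    ∃ M ≥ 0, ∀ Y : Matrix (Fin N) (Fin L) ℂ, (∀ j ∈ Ω, ∀ l, Y j l = atomSum N c f φ j l) →
      ∀ (m : ℕ) (c' g' : Fin m → ℝ) (φ' : Fin m → Fin L → ℂ), IsAtomicDecomp N L Y c' g' φ' →
      ∃ p : Fin m → Fin K, ∑ k, c' k * ‖atom N (g' k) - atom N (f (p k))‖ ≤
        δ * ∑ k, c' k + M * (∑ k, c' k - ∑ k, c k) := by
  obtain ⟨M, hM, hnear⟩ := exists_norm_atom_sub_atom_le hK hφ hQeq hQlt (V := V) hδ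
  refine ⟨M, hM, fun Y hY m c' g' φ' h => ?_⟩
  choose p hp using fun k => hnear (g' k) (h.2.1 k)
  refine ⟨p, ?_⟩
  calc ∑ k, c' k * ‖atom N (g' k) - atom N (f (p k))‖
      ≤ ∑ k, c' k * (δ + M * (1 - vnorm (dualPoly V (g' k)))) :=
        Finset.sum_le_sum fun k _ => mul_le_mul_of_nonneg_left (hp k) (h.1 k).le
    _ = δ * ∑ k, c' k + M * ∑ k, c' k * (1 - vnorm (dualPoly V (g' k))) := by
        simp only [Finset.mul_sum, ← Finset.sum_add_distrib]
        exact Finset.sum_congr rfl fun k _ => by ring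
    _ ≤ δ * ∑ k, c' k + M * (∑ k, c' k - ∑ k, c k) := by
        gcongr
        linarith [sum_add_sum_mul_one_sub_le hφ hQeq hVz hY h]

/-- The atomic norm is an infimum that need not be attained, so strict optimality of `Y^o` is
derived from this quantitative form. -/
theorem exists_forall_norm_sub_atomSum_lt (hK : 0 < K)
    (hφ : ∀ k, ∑ l, Complex.normSq (φ k l) = 1) (hQeq : ∀ k, dualPoly V (f k) = φ k)
    (hQlt : ∀ g ∈ Set.Ico (0 : ℝ) 1, g ∉ Set.range f → vnorm (dualPoly V g) < 1)
    (hVz : ∀ j ∉ Ω, ∀ l, V j l = 0)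
    (hLI : LinearIndependent ℂ fun k : Fin K => fun j : {j : Fin N // j ∈ Ω} =>
      atom N (f k) (j : Fin N)) {ε : ℝ} (hε : 0 < ε) :
    ∃ η > 0, ∀ Y : Matrix (Fin N) (Fin L) ℂ, (∀ j ∈ Ω, ∀ l, Y j l = atomSum N c f φ j l) →
      ∀ (m : ℕ) (c' g' : Fin m → ℝ) (φ' : Fin m → Fin L → ℂ), IsAtomicDecomp N L Y c' g' φ' →
      ∑ k, c' k < ∑ k, c k + η → ∀ i l, ‖Y i l - atomSum N c f φ i l‖ < ε := by
  obtain ⟨C, hC, hCY⟩ := exists_norm_sub_atomSum_le (c := c) (φ := φ) hLI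
  set B := |∑ k, c k| + 1
  have hB : 0 < B := by positivity
  obtain ⟨M, hM, hsnap⟩ := exists_sum_mul_norm_atom_sub_le hK hφ hQeq hQlt hVz
    (δ := ε / (2 * C * B)) (by positivity)
  refine ⟨min 1 (ε / (2 * C * (M + 1))), by positivity, fun Y hY m c' g' φ' h hlt i l => ?_⟩
  obtain ⟨p, hS⟩ := hsnap Y hY m c' g' φ' h
  set t := ∑ k, c' k
  have ht : 0 ≤ t := Finset.sum_nonneg fun k _ => (h.1 k).le
  have htB : t < B := by linarith [le_abs_self (∑ k, c k), min_le_left 1 (ε / (2 * C * (M + 1)))]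
  have hexcess : t - ∑ k, c k < ε / (2 * C * (M + 1)) := by
    linarith [min_le_right 1 (ε / (2 * C * (M + 1)))]
  have h₁ : C * (ε / (2 * C * B) * t) < ε / 2 := by
    calc C * (ε / (2 * C * B) * t) < C * (ε / (2 * C * B) * B) := by gcongr
      _ = ε / 2 := by field_simp
  have h₂ : C * (M * (t - ∑ k, c k)) ≤ ε / 2 := by
    calc C * (M * (t - ∑ k, c k)) ≤ C * (M * (ε / (2 * C * (M + 1)))) := by gcongr
      _ = ε / 2 * (M / (M + 1)) := by field_simp
      _ ≤ ε / 2 :=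
        mul_le_of_le_one_right (by positivity) ((div_le_one (by positivity)).2 (by linarith))
  calc ‖Y i l - atomSum N c f φ i l‖ ≤ C * ∑ k, c' k * ‖atom N (g' k) - atom N (f (p k))‖ :=
        hCY Y hY m c' g' φ' h p i l
    _ ≤ C * (ε / (2 * C * B) * t + M * (t - ∑ k, c k)) := by gcongr
    _ < ε := by linarith

theorem sum_lt_atomicNorm (hK : 0 < K)
    (hφ : ∀ k, ∑ l, Complex.normSq (φ k l) = 1) (hQeq : ∀ k, dualPoly V (f k) = φ k)
    (hQlt : ∀ g ∈ Set.Ico (0 : ℝ) 1, g ∉ Set.range f → vnorm (dualPoly V g) < 1)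
    (hVz : ∀ j ∉ Ω, ∀ l, V j l = 0)
    (hLI : LinearIndependent ℂ fun k : Fin K => fun j : {j : Fin N // j ∈ Ω} =>
      atom N (f k) (j : Fin N)) {Y : Matrix (Fin N) (Fin L) ℂ}
    (hY : ∀ j ∈ Ω, ∀ l, Y j l = atomSum N c f φ j l) (hne : Y ≠ atomSum N c f φ) :
    ∑ k, c k < atomicNorm N L Y := by
  obtain ⟨i, l, hil⟩ : ∃ i l, Y i l ≠ atomSum N c f φ i l := by
    by_contra! h
    exact hne (funext fun i => funext (h i))
  obtain ⟨η, hη, hclose⟩ := exists_forall_norm_sub_atomSum_lt hK hφ hQeq hQlt hVz hLI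
    (norm_pos_iff.2 (sub_ne_zero.2 hil))
  by_contra! hle
  obtain ⟨m, c', g', φ', h, hlt⟩ :=
    exists_isAtomicDecomp_lt (hle.trans_lt (lt_add_of_pos_right _ hη))
  exact lt_irrefl _ (hclose Y hY m c' g' φ' h hlt i l)

theorem IsAtomicDecomp.exists_eq_of_sum_eq (hφ : ∀ k, ∑ l, Complex.normSq (φ k l) = 1)
    (hQeq : ∀ k, dualPoly V (f k) = φ k)
    (hQlt : ∀ g ∈ Set.Ico (0 : ℝ) 1, g ∉ Set.range f → vnorm (dualPoly V g) < 1) {m : ℕ}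
    {c' g' : Fin m → ℝ} {φ' : Fin m → Fin L → ℂ}
    (h : IsAtomicDecomp N L (atomSum N c f φ) c' g' φ') (hsum : ∑ k, c' k = ∑ k, c k) (k : Fin m) :
    ∃ p, g' k = f p ∧ φ' k = φ p := by
  set r : Fin m → ℝ := fun k => (∑ l, conj (dualPoly V (g' k) l) * φ' k l).re
  have hr : ∀ k, r k ≤ vnorm (dualPoly V (g' k)) := fun k =>
    (re_sum_conj_mul_le _ _).trans_eq (by rw [vnorm_of_sum_normSq_eq_one (h.2.2.1 k), mul_one])
  have hr₁ : ∀ k, r k ≤ 1 := fun k => (hr k).trans (vnorm_dualPoly_le_one hφ hQeq hQlt (h.2.1 k))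
  have hpair : ∑ k, c' k * r k = ∑ k, c k := by
    have := congrArg Complex.re (frobInner_atomSum V c' g' φ')
    rw [← h.eq_atomSum, frobInner_atomSum_eq_sum hφ hQeq, Complex.ofReal_re, Complex.re_sum] at this
    simp only [Complex.re_ofReal_mul] at this
    exact this.symm
  have hzero : ∑ k, c' k * (1 - r k) = 0 := by
    simp only [mul_sub, mul_one, Finset.sum_sub_distrib, hpair, hsum, sub_self]
  have hrk : r k = 1 := by
    have := (Finset.sum_eq_zero_iff_of_nonneg fun k _ =>
      mul_nonneg (h.1 k).le (sub_nonneg.2 (hr₁ k))).1 hzero k (Finset.mem_univ k)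
    linarith [(mul_eq_zero.1 this).resolve_left (h.1 k).ne']
  obtain ⟨p, hp⟩ : g' k ∈ Set.range f := by
    by_contra hg
    linarith [hr k, hQlt (g' k) (h.2.1 k) hg]
  refine ⟨p, hp.symm, (eq_of_re_sum_conj_mul_eq_one ?_ (vnorm_of_sum_normSq_eq_one (h.2.2.1 k))
    hrk).symm.trans ?_⟩
  · rw [← hp, hQeq p, vnorm_of_sum_normSq_eq_one (hφ p)]
  · rw [← hp, hQeq p]

theorem IsAtomicDecomp.exists_equiv_of_sum_eq (hc : ∀ k, 0 < c k)
    (hφ : ∀ k, ∑ l, Complex.normSq (φ k l) = 1) (hQeq : ∀ k, dualPoly V (f k) = φ k)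
    (hQlt : ∀ g ∈ Set.Ico (0 : ℝ) 1, g ∉ Set.range f → vnorm (dualPoly V g) < 1)
    (hLI : LinearIndependent ℂ fun k : Fin K => fun j : {j : Fin N // j ∈ Ω} =>
      atom N (f k) (j : Fin N)) {m : ℕ} {c' g' : Fin m → ℝ} {φ' : Fin m → Fin L → ℂ}
    (h : IsAtomicDecomp N L (atomSum N c f φ) c' g' φ') (hinj : Function.Injective g')
    (hsum : ∑ k, c' k = ∑ k, c k) :
    ∃ e : Fin m ≃ Fin K, ∀ k, g' k = f (e k) ∧ c' k = c (e k) ∧ φ' k = φ (e k) := by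
  choose p hp using h.exists_eq_of_sum_eq hφ hQeq hQlt hsum
  have hpinj : Function.Injective p := fun k k' hkk' => hinj (by rw [(hp k).1, (hp k').1, hkk'])
  have hφ₀ : ∀ q, φ q ≠ 0 := fun q hq => by simpa [hq] using hφ q
  have hrows :
      ∑ k, (c' k : ℂ) • Matrix.vecMulVec (fun j : {j // j ∈ Ω} => atom N (f (p k)) j) (φ (p k)) =
        ∑ q, (c q : ℂ) • Matrix.vecMulVec (fun j : {j // j ∈ Ω} => atom N (f q) j) (φ q) := by
    ext j l
    have := h.2.2.2 j l
    simp only [Matrix.sum_apply, Matrix.smul_apply, Matrix.vecMulVec_apply, smul_eq_mul]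
    simp only [atomSum, (hp _).1, (hp _).2] at this
    simp only [← mul_assoc]
    exact this.symm
  obtain ⟨hbij, hcoef⟩ := (hLI.vecMulVec hφ₀).bijective_of_sum_comp_eq hpinj
    (fun q => Complex.ofReal_ne_zero.2 (hc q).ne') hrows
  exact ⟨Equiv.ofBijective p hbij, fun k => ⟨(hp k).1, by exact_mod_cast hcoef k, (hp k).2⟩⟩

end Certificate

theorem dual_certificate_exact_recovery_general (N L K : ℕ) (hK : 0 < K)
    (f : Fin K → ℝ) (hf : ∀ k, f k ∈ Set.Ico (0 : ℝ) 1)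
    (c : Fin K → ℝ) (hc : ∀ k, 0 < c k)
    (φ : Fin K → Fin L → ℂ) (hφ : ∀ k, ∑ l, Complex.normSq (φ k l) = 1)
    (Ω : Finset (Fin N))
    (hLI : LinearIndependent ℂ fun k : Fin K => fun j : {j : Fin N // j ∈ Ω} =>
      atom N (f k) (j : Fin N))
    (V : Matrix (Fin N) (Fin L) ℂ)
    (hQeq : ∀ k, (fun l => ∑ j, (starRingEnd ℂ) (atom N (f k) j) * V j l) = φ k)
    (hQlt : ∀ g ∈ Set.Ico (0 : ℝ) 1, g ∉ Set.range f →
      vnorm (fun l => ∑ j, (starRingEnd ℂ) (atom N g j) * V j l) < 1)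
    (hVz : ∀ j : Fin N, j ∉ Ω → ∀ l, V j l = 0) :
    ExactRecovery N L K f c φ Ω (fun j l => ∑ k, (c k : ℂ) * atom N (f k) j * φ k l) := by
  change ExactRecovery N L K f c φ Ω (atomSum N c f φ)
  have hnorm : atomicNorm N L (atomSum N c f φ) = ∑ k, c k :=
    le_antisymm (atomicNorm_le ⟨hc, hf, hφ, fun _ _ => rfl⟩)
      (sum_le_atomicNorm hφ hQeq hQlt hVz fun _ _ _ => rfl)
  refine ⟨fun Y hY hne => ?_, hnorm, fun m c' g' φ' h hinj hsum => ?_⟩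
  · rw [hnorm]
    exact sum_lt_atomicNorm hK hφ hQeq hQlt hVz hLI hY hne
  · exact h.exists_equiv_of_sum_eq hc hφ hQeq hQlt hLI hinj hsum

/-- Dual certificate proposition: if `{a_Ω(f_k)}` are linearly independent and there is a dual
polynomial `Q(f) = a(f)ᴴV` with `Q(f_k) = φ_k`, `‖Q(f)‖₂ < 1` off the support, and `V` supported
on the rows indexed by `Ω`, then `Y^o` is the unique minimizer of the atomic norm problem and
its atomic decomposition is unique, with `‖Y^o‖_A = ∑ c_k`. -/
theorem dual_certificate_exact_recovery (N L K : ℕ) (hN : 0 < N) (hL : 0 < L) (hK : 0 < K)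
    (f : Fin K → ℝ) (hf : ∀ k, f k ∈ Set.Ico (0 : ℝ) 1) (hinj : Function.Injective f)
    (c : Fin K → ℝ) (hc : ∀ k, 0 < c k)
    (φ : Fin K → Fin L → ℂ) (hφ : ∀ k, ∑ l, Complex.normSq (φ k l) = 1)
    (Ω : Finset (Fin N))
    (hLI : LinearIndependent ℂ fun k : Fin K => fun j : {j : Fin N // j ∈ Ω} =>
      atom N (f k) (j : Fin N))
    (V : Matrix (Fin N) (Fin L) ℂ)
    (hQeq : ∀ k, (fun l => ∑ j, (starRingEnd ℂ) (atom N (f k) j) * V j l) = φ k)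
    (hQlt : ∀ g ∈ Set.Ico (0 : ℝ) 1, g ∉ Set.range f →
      vnorm (fun l => ∑ j, (starRingEnd ℂ) (atom N g j) * V j l) < 1)
    (hVz : ∀ j : Fin N, j ∉ Ω → ∀ l, V j l = 0) :
    ExactRecovery N L K f c φ Ω (fun j l => ∑ k, (c k : ℂ) * atom N (f k) j * φ k l) :=
  dual_certificate_exact_recovery_general N L K hK f hf c hc φ hφ Ω hLI V hQeq hQlt hVz
end

section
/- For every x ≥ 0 there is a unique y(x) ≥ 1 satisfying y(x) − log y(x) − 1 = x. The function x ↦ y(x) is monotonically increasing on [0,∞), and for all x ≥ 0 it satisfies 1 + x ≤ y(x) ≤ 2(1 + x). -/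
/-!
The map `y ↦ y - log y` is strictly increasing on `[1, ∞)`, because
`log b - log a = log (b / a) < b / a - 1 ≤ b - a` for `1 ≤ a < b`. Hence `y - log y - 1 = x` has at
most one solution `y ≥ 1`, and `Y` is strictly increasing. A solution exists in `[1 + x, 2 (1 + x)]`
by the intermediate value theorem: at the left end `log (1 + x) ≥ 0`, at the right end
`log (2 (1 + x)) = log 2 + log (1 + x) ≤ 1 + x` since `log 2 < 1` and `log (1 + x) ≤ x`.
Uniqueness then places `Y x` in that interval.
-/

open Real Set

lemma strictMonoOn_sub_log : StrictMonoOn (fun y : ℝ => y - log y) (Ici 1) := by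
  intro a (ha : 1 ≤ a) b (hb : 1 ≤ b) hab
  have ha₀ : 0 < a := by linarith
  have hb₀ : 0 < b := by linarith
  have hlog : log b - log a < b / a - 1 := by
    rw [← log_div hb₀.ne' ha₀.ne']
    exact log_lt_sub_one_of_pos (div_pos hb₀ ha₀) (by rw [Ne, div_eq_one_iff_eq ha₀.ne']; exact hab.ne')
  have hdiv : b / a - 1 ≤ b - a := by
    rw [div_sub_one ha₀.ne']
    exact div_le_self (by linarith) ha
  show a - log a < b - log b
  linarith

lemma sub_log_lt_sub_log_iff {a b : ℝ} (ha : 1 ≤ a) (hb : 1 ≤ b) :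
    a - log a < b - log b ↔ a < b :=
  strictMonoOn_sub_log.lt_iff_lt ha hb

lemma eq_of_sub_log_eq {a b : ℝ} (ha : 1 ≤ a) (hb : 1 ≤ b) (h : a - log a = b - log b) : a = b :=
  strictMonoOn_sub_log.injOn ha hb h

lemma continuousOn_sub_log : ContinuousOn (fun y : ℝ => y - log y) (Ici 1) :=
  continuousOn_id.sub <| continuousOn_log.mono fun y (hy : 1 ≤ y) => by
    simp only [mem_compl_iff, mem_singleton_iff]; positivity

lemma exists_sub_log_sub_one_eq {x : ℝ} (hx : 0 ≤ x) :
    ∃ y ∈ Icc (1 + x) (2 * (1 + x)), y - log y - 1 = x := by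
  have hleft : (1 + x) - log (1 + x) ≤ 1 + x := by
    linarith [log_nonneg (show (1 : ℝ) ≤ 1 + x by linarith)]
  have hright : 1 + x ≤ 2 * (1 + x) - log (2 * (1 + x)) := by
    have hlog₂ : log 2 < 1 := by linarith [log_lt_sub_one_of_pos two_pos (by norm_num)]
    have hlog : log (1 + x) ≤ x := by linarith [log_le_sub_one_of_pos (by linarith : 0 < 1 + x)]
    rw [log_mul two_ne_zero (by linarith)]
    linarith
  obtain ⟨y, hy, hyx⟩ := intermediate_value_Icc (by linarith)
    (continuousOn_sub_log.mono fun y (hy : y ∈ Icc (1 + x) (2 * (1 + x))) =>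
      show 1 ≤ y by linarith [hy.1]) ⟨hleft, hright⟩
  exact ⟨y, hy, by linarith [show y - log y = 1 + x from hyx]⟩

/-- For every `x ≥ 0` there is a unique `y ≥ 1` with `y - log y - 1 = x`; the resulting function
`x ↦ y(x)` is monotonically increasing and satisfies `1 + x ≤ y(x) ≤ 2(1 + x)`. -/
theorem unique_solution_y_sub_log_y
    : (∀ x : ℝ, 0 ≤ x → ∃! y : ℝ, 1 ≤ y ∧ y - Real.log y - 1 = x) ∧
      (∀ Y : ℝ → ℝ, (∀ x : ℝ, 0 ≤ x → 1 ≤ Y x ∧ Y x - Real.log (Y x) - 1 = x) →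
        StrictMonoOn Y (Set.Ici 0) ∧
        ∀ x : ℝ, 0 ≤ x → 1 + x ≤ Y x ∧ Y x ≤ 2 * (1 + x)) := by
  have unique {x y z : ℝ} (hy : 1 ≤ y) (hyx : y - log y - 1 = x) (hz : 1 ≤ z)
      (hzx : z - log z - 1 = x) : z = y :=
    eq_of_sub_log_eq hz hy (by linarith)
  refine ⟨fun x hx => ?_, fun Y hY => ⟨?_, fun x hx => ?_⟩⟩
  · obtain ⟨y, hy, hyx⟩ := exists_sub_log_sub_one_eq hx
    have hy₁ : 1 ≤ y := by linarith [hy.1]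
    exact ⟨y, ⟨hy₁, hyx⟩, fun z ⟨hz, hzx⟩ => unique hy₁ hyx hz hzx⟩
  · intro a (ha : 0 ≤ a) b (hb : 0 ≤ b) hab
    obtain ⟨hYa, hYax⟩ := hY a ha
    obtain ⟨hYb, hYbx⟩ := hY b hb
    exact (sub_log_lt_sub_log_iff hYa hYb).1 (by linarith)
  · obtain ⟨y, hy, hyx⟩ := exists_sub_log_sub_one_eq hx
    obtain ⟨hYx, hYxx⟩ := hY x hx
    rw [unique (by linarith [hy.1]) hyx hYx hYxx]
    exact hy
end
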